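/- Let A be an infinite alphabet and f̃ : A^{M+2} → {0,1} with M ≥ 1. Suppose (1) there exist x_1,…,x_M ∈ A and infinitely many x_{M+1} ∈ A such that all M+2 cyclic rotations of the word x_1⋯x_M x_{M+1} x_1 (i.e., f̃(x_1,…,x_{M+1},x_1) = f̃(x_2,…,x_{M+1},x_1,x_2) = ⋯ = f̃(x_{M+1},x_1,…,x_{M+1}) = 1) hold, and (2) for every (x_1,…,x_{M+1}) ∈ A^{M+1}, only finitely many x_{M+2} ∈ A satisfy f̃(x_1,…,x_{M+2}) = 1. Then the (M+1)-step shift space X_f determined by forbidding words w of length M+2 with f̃(w) = 0 is not conjugate to any M-step shift space over any alphabet. -/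

import Mathlib

open Set Filter Topology

/-- Elements of the full shift `Σ_A`: `Option`-valued sequences that stay `none`
once they are `none` (so they are either everywhere-defined infinite sequences,
or finite words followed by `none`s; the empty word is the all-`none` sequence). -/
def IsWordFun {A : Type*} (x : ℕ → Option A) : Prop :=
  ∀ m n : ℕ, m ≤ n → x m = none → x n = none

/-- The full shift `Σ_A = A^ℕ ∪ {finite words over A}`. -/
def FullShift (A : Type*) : Type _ := {x : ℕ → Option A // IsWordFun x}

namespace FullShift

variable {A B : Type*}

/-- The length of an element of the full shift, in `ℕ∞`. -/
noncomputable def len (x : FullShift A) : ℕ∞ :=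
  sInf {n : ℕ∞ | ∃ m : ℕ, n = (m : ℕ∞) ∧ x.1 m = none}

/-- The shift map `σ`, deleting the first letter. -/
def shift (x : FullShift A) : FullShift A :=
  ⟨fun n => x.1 (n + 1), fun m n h hm => x.2 (m + 1) (n + 1) (by omega) hm⟩

/-- The empty word `∅`. -/
def emptyWord : FullShift A := ⟨fun _ => none, fun _ _ _ _ => rfl⟩

/-- The finite word determined by a list. -/
def word (l : List A) : FullShift A :=
  ⟨fun n => l[n]?, by
    intro m n h hm
    rw [List.getElem?_eq_none_iff] at hm ⊢
    omega⟩

/-- The infinite sequence determined by a function `ℕ → A`. -/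
def infSeq (g : ℕ → A) : FullShift A :=
  ⟨fun n => some (g n), by intro m n _ hm; simp at hm⟩

/-- Generalized cylinder set `Z(w, F)`: elements beginning with the finite word `w`
whose next letter, if any, does not lie in the finite set `F`. -/
def Cyl (w : List A) (F : Finset A) : Set (FullShift A) :=
  {y | (∀ i < w.length, y.1 i = w[i]?) ∧ ∀ a ∈ F, y.1 w.length ≠ some a}

/-- The topology on `Σ_A` generated by the generalized cylinder sets. -/
instance : TopologicalSpace (FullShift A) :=
  TopologicalSpace.generateFrom {S | ∃ (w : List A) (F : Finset A), S = Cyl w F}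

/-- A shift space: closed, shift-invariant, with the infinite-extension property. -/
def IsShiftSpace (Λ : Set (FullShift A)) : Prop :=
  IsClosed Λ ∧ (∀ x ∈ Λ, shift x ∈ Λ) ∧
    ∀ x ∈ Λ, ∀ n : ℕ, len x = (n : ℕ∞) →
      {a : A | ∃ z ∈ Λ, (∀ i < n, z.1 i = x.1 i) ∧ z.1 n = some a}.Infinite

/-- `u` occurs as a subblock of `x`. -/
def Occurs (u : List A) (x : FullShift A) : Prop :=
  ∃ i : ℕ, ∀ j < u.length, x.1 (i + j) = u[j]?

/-- The infinite sequences avoiding every word in `Fb` as a subblock. -/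
def XinfL (Fb : Set (List A)) : Set (FullShift A) :=
  {x | (∀ n, x.1 n ≠ none) ∧ ∀ u ∈ Fb, ¬ Occurs u x}

/-- The shift space `X_F` determined by the forbidden words `Fb`: the infinite
sequences avoiding `Fb`, together with the finite words `x` such that for
infinitely many `a ∈ A` some extension `x a y` lies in `X_F^inf`. -/
def XL (Fb : Set (List A)) : Set (FullShift A) :=
  XinfL Fb ∪ {x | ∃ n : ℕ, len x = (n : ℕ∞) ∧
    {a : A | ∃ z ∈ XinfL Fb, (∀ i < n, z.1 i = x.1 i) ∧ z.1 n = some a}.Infinite}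

/-- The infinite sequences all of whose length-`N` windows `v` satisfy `ft v = true`
(i.e. avoiding all length-`N` words `w` with `ft w = 0`). -/
def XinfT {N : ℕ} (ft : (Fin N → A) → Bool) : Set (FullShift A) :=
  {x | (∀ n, x.1 n ≠ none) ∧
    ∀ (i : ℕ) (v : Fin N → A), (∀ j : Fin N, x.1 (i + (j : ℕ)) = some (v j)) → ft v = true}

/-- The shift space `X_f` determined by forbidding the length-`N` words `w`
with `ft w = 0`. -/
def XT {N : ℕ} (ft : (Fin N → A) → Bool) : Set (FullShift A) :=
  XinfT ft ∪ {x | ∃ n : ℕ, len x = (n : ℕ∞) ∧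
    {a : A | ∃ z ∈ XinfT ft, (∀ i < n, z.1 i = x.1 i) ∧ z.1 n = some a}.Infinite}

/-- `Y` is an `M`-step shift space: determined by forbidden words of length `M + 1`,
equivalently by a function `g̃ : B^{M+1} → {0,1}`. -/
def IsStepShift (M : ℕ) (Y : Set (FullShift B)) : Prop :=
  ∃ gt : (Fin (M + 1) → B) → Bool, Y = XT gt

/-- `φ` is a conjugacy from `Λ` onto `Y`: bijective, continuous, shift-commuting
and length-preserving. -/
def IsConjugacy (Λ : Set (FullShift A)) (Y : Set (FullShift B))
    (φ : FullShift A → FullShift B) : Prop :=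
  Set.BijOn φ Λ Y ∧ ContinuousOn φ Λ ∧
    (∀ x ∈ Λ, φ (shift x) = shift (φ x)) ∧ ∀ x ∈ Λ, len (φ x) = len x

/-- `Λ` and `Y` are conjugate shift spaces. -/
def Conjugate (Λ : Set (FullShift A)) (Y : Set (FullShift B)) : Prop :=
  ∃ φ : FullShift A → FullShift B, IsConjugacy Λ Y φ

/-- The periodic sequence `(x_1 ⋯ x_M b)^∞` of period `M + 1`. -/
def per (M : ℕ) (x : Fin M → A) (b : A) : ℕ → A :=
  fun n => if h : n % (M + 1) < M then x ⟨n % (M + 1), h⟩ else b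

end FullShift

/-!
Let `φ : X_f → Y` be a conjugacy onto an `M`-step shift. The word `x` of (1) lies in `X_f` as the
limit of the periodic points `(x b)^∞` given by (1); its image is a word `d` of length `M`, so by
continuity the images of cofinitely many `(x b)^∞` begin with `d`, and being `(M + 1)`-periodic
they are points `(d c_b)^∞` with pairwise distinct `c_b`. Since `Y` is `M`-step, `d c d e d e ⋯`
lies in `Y` for all `c, e` among the `c_b`, so the word `d c d` of length `2M + 1` lies in `Y`. Its
preimage is a finite word of length `2M + 1` in `X_f`, which is impossible: by (2) such a word has
only finitely many one-letter extensions in `X_f`, while finite words of `X_f` have infinitely many.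
-/

namespace FullShift

variable {A B : Type*}

lemma apply_eq_none_of_len_le {x : FullShift A} {n : ℕ} (h : len x ≤ n) : x.1 n = none := by
  have hne : {n : ℕ∞ | ∃ m : ℕ, n = (m : ℕ∞) ∧ x.1 m = none}.Nonempty := by
    by_contra hemp
    rw [Set.not_nonempty_iff_eq_empty] at hemp
    rw [len, hemp, sInf_empty] at h
    exact ENat.natCast_ne_top n (top_le_iff.mp h)
  obtain ⟨m, hm, hxm⟩ := csInf_mem hne
  have hmn : (m : ℕ∞) ≤ n := hm ▸ h
  exact x.2 m n (by exact_mod_cast hmn) hxm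

lemma exists_eq_some_of_lt_len {x : FullShift A} {n : ℕ} (h : (n : ℕ∞) < len x) :
    ∃ a, x.1 n = some a :=
  Option.ne_none_iff_exists'.mp fun hn => h.not_ge (sInf_le ⟨n, rfl, hn⟩)

lemma len_eq_top_iff {x : FullShift A} : len x = ⊤ ↔ ∀ n, x.1 n ≠ none := by
  refine ⟨fun h n hn => ?_, fun h => ?_⟩
  · exact ENat.natCast_ne_top n (top_le_iff.mp (h ▸ sInf_le ⟨n, rfl, hn⟩))
  · rw [len, sInf_eq_top]
    rintro _ ⟨m, rfl, hm⟩
    exact absurd hm (h m)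

lemma len_word (l : List A) : len (word l) = l.length := by
  refine le_antisymm (sInf_le ⟨l.length, rfl, by simp [word]⟩) (le_sInf ?_)
  rintro _ ⟨m, rfl, hm⟩
  exact_mod_cast List.getElem?_eq_none_iff.mp hm

lemma len_infSeq (s : ℕ → A) : len (infSeq s) = ⊤ :=
  len_eq_top_iff.mpr fun n => Option.some_ne_none (s n)

lemma exists_eq_word_ofFn_of_len_eq {y : FullShift A} {n : ℕ} (h : len y = n) :
    ∃ d : Fin n → A, y = word (List.ofFn d) := by
  choose d hd using fun i : Fin n =>
    exists_eq_some_of_lt_len (x := y) (n := i) (by rw [h]; exact_mod_cast i.2)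
  refine ⟨d, Subtype.ext (funext fun i => ?_)⟩
  by_cases hi : i < n
  · simpa [word, hi] using hd ⟨i, hi⟩
  · have hni : len y ≤ i := by rw [h]; exact_mod_cast not_lt.mp hi
    simp [word, apply_eq_none_of_len_le hni, hi]

lemma shift_iterate_apply (k : ℕ) (x : FullShift A) (n : ℕ) :
    (shift^[k] x).1 n = x.1 (n + k) := by
  induction k generalizing x with
  | zero => rfl
  | succ k ih => exact ih (shift x)

section StepShift

variable {N : ℕ} {ft : (Fin N → A) → Bool}

def followers (S : Set (FullShift A)) (x : FullShift A) (n : ℕ) : Set A :=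
  {a | ∃ z ∈ S, (∀ i < n, z.1 i = x.1 i) ∧ z.1 n = some a}

lemma len_of_mem_XinfT {x : FullShift A} (hx : x ∈ XinfT ft) : len x = ⊤ :=
  len_eq_top_iff.mpr hx.1

lemma mem_XinfT_of_mem_XT {x : FullShift A} (hx : x ∈ XT ft) (hlen : len x = ⊤) :
    x ∈ XinfT ft := by
  rcases hx with hx | ⟨n, hn, -⟩
  · exact hx
  · exact absurd (hn.symm.trans hlen) (ENat.natCast_ne_top n)

lemma followers_infinite_of_mem_XT {x : FullShift A} (hx : x ∈ XT ft) {n : ℕ}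
    (hlen : len x = n) : (followers (XinfT ft) x n).Infinite := by
  rcases hx with hx | ⟨m, hm, hinf⟩
  · exact absurd (hlen.symm.trans (len_of_mem_XinfT hx)) (ENat.natCast_ne_top n)
  · rwa [Nat.cast_injective (hlen.symm.trans hm)]

lemma word_mem_XT_of_followers_infinite {l : List A}
    (h : (followers (XinfT ft) (word l) l.length).Infinite) : word l ∈ XT ft :=
  Or.inr ⟨l.length, len_word l, h⟩

lemma infSeq_mem_XinfT_iff {s : ℕ → A} :
    infSeq s ∈ XinfT ft ↔ ∀ i, ft (fun j : Fin N => s (i + j)) = true := by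
  refine ⟨fun h i => h.2 i _ fun j => rfl, fun h => ⟨fun n => Option.some_ne_none _, ?_⟩⟩
  intro i v hv
  have hv' : v = fun j : Fin N => s (i + j) := funext fun j => (Option.some.inj (hv j)).symm
  exact hv' ▸ h i

lemma infSeq_mem_XinfT_of_forall_window {s : ℕ → A}
    (h : ∀ i, ∃ s', infSeq s' ∈ XinfT ft ∧ ∀ j : Fin N, s (i + j) = s' (i + j)) :
    infSeq s ∈ XinfT ft := by
  refine infSeq_mem_XinfT_iff.mpr fun i => ?_
  obtain ⟨s', hs', hwin⟩ := h i
  simpa only [hwin] using infSeq_mem_XinfT_iff.mp hs' i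

lemma shift_mem_XinfT {x : FullShift A} (hx : x ∈ XinfT ft) : shift x ∈ XinfT ft := by
  refine ⟨fun n => hx.1 (n + 1), fun i v hv => hx.2 (i + 1) v fun j => ?_⟩
  rw [Nat.add_right_comm]
  exact hv j

end StepShift

section Periodic

variable {M : ℕ} (x : Fin M → A) (b : A)

lemma per_of_mod_eq {n : ℕ} (h : n % (M + 1) = M) : per M x b n = b :=
  dif_neg h.not_lt

lemma per_of_lt {n : ℕ} (h : n < M) : per M x b n = x ⟨n, h⟩ := by
  have hmod : n % (M + 1) = n := Nat.mod_eq_of_lt (by omega)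
  simp only [per, hmod, dif_pos h]

lemma per_self : per M x b M = b :=
  per_of_mod_eq x b (Nat.mod_eq_of_lt M.lt_succ_self)

lemma per_add_period (n : ℕ) : per M x b (n + (M + 1)) = per M x b n := by
  simp only [per, Nat.add_mod_right]

lemma per_add_period_of_lt {m : ℕ} (hm : m < M) :
    per M x b (m + (M + 1)) = x ⟨m, hm⟩ := by
  rw [per_add_period, per_of_lt x b hm]

lemma shift_iterate_infSeq_per : shift^[M + 1] (infSeq (per M x b)) = infSeq (per M x b) :=
  Subtype.ext (funext fun n => by
    rw [shift_iterate_apply]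
    exact congrArg some (per_add_period x b n))

lemma infSeq_per_injective : Function.Injective fun b => infSeq (per M x b) := by
  intro b b' h
  simpa [infSeq, per_self] using congrArg (fun z : FullShift A => z.1 M) h

variable {b} in
lemma infSeq_per_mem_cyl {G : Finset A} (hb : b ∉ G) :
    infSeq (per M x b) ∈ Cyl (List.ofFn x) G := by
  refine ⟨fun i hi => ?_, fun a ha h => ?_⟩
  · rw [List.length_ofFn] at hi
    simp [infSeq, per_of_lt x b hi, hi]
  · rw [List.length_ofFn] at h
    exact hb (Option.some.inj ((congrArg some (per_self x b)).symm.trans h) ▸ ha)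

variable {x} in
lemma exists_eq_infSeq_per {y : FullShift A} (hy : len y = ⊤) (hper : shift^[M + 1] y = y)
    (hx : ∀ i : Fin M, y.1 i = some (x i)) : ∃ c, y = infSeq (per M x c) := by
  obtain ⟨c, hc⟩ := Option.ne_none_iff_exists'.mp (len_eq_top_iff.mp hy M)
  refine ⟨c, Subtype.ext (funext fun n => ?_)⟩
  induction n using Nat.strong_induction_on with
  | _ n ih =>
    rcases lt_trichotomy n M with hn | rfl | hn
    · rw [hx ⟨n, hn⟩]
      exact congrArg some (per_of_lt x c hn).symm
    · rw [hc]
      exact congrArg some (per_self x c).symm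
    · obtain ⟨m, rfl⟩ : ∃ m, n = m + (M + 1) := ⟨n - (M + 1), by omega⟩
      rw [← shift_iterate_apply, hper, ih m (by omega)]
      exact congrArg some (per_add_period x c m).symm

end Periodic

lemma isOpen_cyl (w : List A) (F : Finset A) : IsOpen (Cyl w F) :=
  TopologicalSpace.GenerateOpen.basic _ ⟨w, F, rfl⟩

lemma word_mem_cyl (l : List A) : word l ∈ Cyl l ∅ :=
  ⟨fun _ _ => rfl, by simp⟩

lemma cyl_subset_of_word_mem_cyl {l w : List A} {F : Finset A} (h : word l ∈ Cyl w F) :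
    Cyl l F ⊆ Cyl w F := by
  have hwl : w.length ≤ l.length := by
    by_contra! hlt
    have hw := h.1 l.length hlt
    simp [word, List.getElem?_eq_getElem hlt] at hw
  intro y hy
  refine ⟨fun i hi => (hy.1 i (by omega)).trans (h.1 i hi), fun a ha => ?_⟩
  rcases hwl.lt_or_eq with hlt | heq
  · rw [hy.1 _ hlt]
    exact h.2 a ha
  · exact heq ▸ hy.2 a ha

lemma exists_cyl_subset_of_isOpen {O : Set (FullShift A)} (hO : IsOpen O) {l : List A}
    (hl : word l ∈ O) : ∃ G : Finset A, Cyl l G ⊆ O := by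
  classical
  induction hO with
  | basic s hs =>
    obtain ⟨w, F, rfl⟩ := hs
    exact ⟨F, cyl_subset_of_word_mem_cyl hl⟩
  | univ => exact ⟨∅, Set.subset_univ _⟩
  | inter s t _ _ ihs iht =>
    obtain ⟨G, hG⟩ := ihs hl.1
    obtain ⟨G', hG'⟩ := iht hl.2
    refine ⟨G ∪ G', fun y hy => ⟨hG ⟨hy.1, fun a ha => ?_⟩, hG' ⟨hy.1, fun a ha => ?_⟩⟩⟩
    · exact hy.2 a (Finset.mem_union_left _ ha)
    · exact hy.2 a (Finset.mem_union_right _ ha)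
  | sUnion S _ ih =>
    obtain ⟨t, htS, hlt⟩ := hl
    obtain ⟨G, hG⟩ := ih t htS hlt
    exact ⟨G, hG.trans (Set.subset_sUnion_of_mem htS)⟩

lemma _root_.ContinuousOn.exists_cyl_inter_subset_preimage {Λ : Set (FullShift A)}
    {φ : FullShift A → FullShift B} (hφ : ContinuousOn φ Λ) {l : List A} (hl : word l ∈ Λ)
    {U : Set (FullShift B)} (hU : IsOpen U) (hφU : φ (word l) ∈ U) :
    ∃ G : Finset A, Cyl l G ∩ Λ ⊆ φ ⁻¹' U := by
  obtain ⟨O, hO, hlO, hOU⟩ :=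
    mem_nhdsWithin.mp ((hφ _ hl).preimage_mem_nhdsWithin (hU.mem_nhds hφU))
  obtain ⟨G, hG⟩ := exists_cyl_subset_of_isOpen hO hlO
  exact ⟨G, (Set.inter_subset_inter_left _ hG).trans hOU⟩

section Conjugacy

variable {Λ : Set (FullShift A)} {Y : Set (FullShift B)} {φ : FullShift A → FullShift B}

lemma IsConjugacy.map_shift_iterate (hφ : IsConjugacy Λ Y φ) {S : Set (FullShift A)}
    (hSΛ : S ⊆ Λ) (hS : ∀ x ∈ S, shift x ∈ S) (k : ℕ) {x : FullShift A} (hx : x ∈ S) :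
    φ (shift^[k] x) = shift^[k] (φ x) := by
  induction k generalizing x with
  | zero => rfl
  | succ k ih =>
    rw [Function.iterate_succ_apply, ih (hS x hx), hφ.2.2.1 x (hSΛ hx),
      Function.iterate_succ_apply]

lemma IsConjugacy.mapsTo_XinfT {N K : ℕ} {ft : (Fin N → A) → Bool} {gt : (Fin K → B) → Bool}
    (hφ : IsConjugacy (XT ft) (XT gt) φ) : Set.MapsTo φ (XinfT ft) (XinfT gt) := fun x hx =>
  mem_XinfT_of_mem_XT (hφ.1.mapsTo (Or.inl hx))
    ((hφ.2.2.2 x (Or.inl hx)).trans (len_of_mem_XinfT hx))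

end Conjugacy

lemma followers_XinfT_subset {N : ℕ} {ft : (Fin (N + 1) → A) → Bool} {u : FullShift A}
    {k : ℕ} {v : Fin N → A} (hv : ∀ j : Fin N, u.1 (k + j) = some (v j)) :
    followers (XinfT ft) u (k + N) ⊆ {a | ft (Fin.snoc v a) = true} := by
  rintro a ⟨z, hz, hzu, hza⟩
  refine hz.2 k (Fin.snoc v a) (Fin.lastCases ?_ fun j => ?_)
  · simpa using hza
  · simpa [hzu (k + j) (by omega)] using hv j

lemma len_eq_top_of_mem_XT {N : ℕ} {ft : (Fin (N + 1) → A) → Bool}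
    (hfin : ∀ v : Fin N → A, {a | ft (Fin.snoc v a) = true}.Finite) {u : FullShift A}
    (hu : u ∈ XT ft) (hN : (N : ℕ∞) ≤ len u) : len u = ⊤ := by
  by_contra htop
  obtain ⟨n, hn⟩ := ENat.ne_top_iff_exists.mp htop
  have hNn : N ≤ n := by exact_mod_cast hn ▸ hN
  choose v hv using fun j : Fin N =>
    exists_eq_some_of_lt_len (x := u) (n := n - N + j) (by rw [← hn]; exact_mod_cast (by omega))
  have hsub := followers_XinfT_subset (ft := ft) hv
  rw [Nat.sub_add_cancel hNn] at hsub
  exact ((hfin v).subset hsub).not_infinite (followers_infinite_of_mem_XT hu hn.symm)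

lemma word_mem_XT_of_infSeq_per_mem {M : ℕ} {gt : (Fin (M + 1) → B) → Bool} (d : Fin M → B)
    {C : Set B} (hC : C.Infinite) (hCper : ∀ e ∈ C, infSeq (per M d e) ∈ XinfT gt) {c : B}
    (hc : c ∈ C) : word (List.ofFn fun i : Fin (2 * M + 1) => per M d c i) ∈ XT gt := by
  -- `glue e` is `d c d e d e ⋯`: each window of length `M + 1` meets exactly one of the
  -- positions `M + k (M + 1)`, so it is a window of `(d c)^∞` or of `(d e)^∞`.
  set glue : B → ℕ → B := fun e n => if n ≤ M then per M d c n else per M d e n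
  have hglue_tail : ∀ e m (hm : m < M), glue e (m + (M + 1)) = d ⟨m, hm⟩ := fun e m hm => by
    simp only [glue, if_neg (by omega : ¬ m + (M + 1) ≤ M), per_add_period_of_lt d e hm]
  have hglue_mem : ∀ e ∈ C, infSeq (glue e) ∈ XinfT gt := by
    intro e he
    refine infSeq_mem_XinfT_of_forall_window fun i => ⟨per M d (if i ≤ M then c else e),
      hCper _ (by split_ifs <;> assumption), fun j => ?_⟩
    by_cases hn : i + j ≤ M
    · simp only [glue, hn, if_true, if_pos (by omega : i ≤ M)]
    by_cases hi : i ≤ M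
    · obtain ⟨m, hm, hmn⟩ : ∃ m < M, i + j = m + (M + 1) := ⟨i + j - (M + 1), by omega, by omega⟩
      rw [hmn, hglue_tail e m hm, if_pos hi, per_add_period_of_lt d c hm]
    · simp only [glue, hn, hi, if_false]
  refine word_mem_XT_of_followers_infinite (hC.mono fun e he => ⟨_, hglue_mem e he, ?_, ?_⟩)
  · intro i hi
    rw [List.length_ofFn] at hi
    simp only [infSeq, word, List.getElem?_ofFn, dif_pos hi]
    by_cases hiM : i ≤ M
    · simp only [glue, if_pos hiM]
    · obtain ⟨m, hm, rfl⟩ : ∃ m < M, i = m + (M + 1) := ⟨i - (M + 1), by omega, by omega⟩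
      rw [hglue_tail e m hm, per_add_period_of_lt d c hm]
  · have hlast : glue e (M + (M + 1)) = e := by
      simp only [glue, if_neg (by omega : ¬ M + (M + 1) ≤ M), per_add_period, per_self]
    simp only [List.length_ofFn, infSeq, two_mul, add_assoc, hlast]

lemma IsConjugacy.exists_infinite_infSeq_per {N K M : ℕ} {ft : (Fin N → A) → Bool}
    {gt : (Fin K → B) → Bool} {φ : FullShift A → FullShift B}
    (hφ : IsConjugacy (XT ft) (XT gt) φ) {x : Fin M → A} {I : Set A} (hI : I.Infinite)
    (hIx : ∀ b ∈ I, infSeq (per M x b) ∈ XinfT ft) :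
    ∃ (d : Fin M → B) (C : Set B), C.Infinite ∧ ∀ e ∈ C, infSeq (per M d e) ∈ XinfT gt := by
  have hword : word (List.ofFn x) ∈ XT ft := by
    refine word_mem_XT_of_followers_infinite (hI.mono fun b hb => ⟨_, hIx b hb, ?_, ?_⟩)
    · exact (infSeq_per_mem_cyl x (Finset.notMem_empty b)).1
    · simp only [List.length_ofFn, infSeq, per_self]
  obtain ⟨d, hd⟩ := exists_eq_word_ofFn_of_len_eq
    ((hφ.2.2.2 _ hword).trans ((len_word _).trans (by rw [List.length_ofFn])))
  obtain ⟨G, hG⟩ := hφ.2.1.exists_cyl_inter_subset_preimage hword (isOpen_cyl (List.ofFn d) ∅)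
    (hd ▸ word_mem_cyl _)
  have hper : ∀ b ∈ I \ G, ∃ c, φ (infSeq (per M x b)) = infSeq (per M d c) := by
    intro b ⟨hbI, hbG⟩
    have hmem : infSeq (per M x b) ∈ XT ft := Or.inl (hIx b hbI)
    refine exists_eq_infSeq_per ((hφ.2.2.2 _ hmem).trans (len_infSeq _)) ?_ fun i => ?_
    · rw [← hφ.map_shift_iterate (fun _ => Or.inl) (fun _ => shift_mem_XinfT) _ (hIx b hbI),
        shift_iterate_infSeq_per]
    · simpa using (hG ⟨infSeq_per_mem_cyl x hbG, hmem⟩).1 i (by simp)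
  have hIG : (I \ G).Infinite := hI.sdiff G.finite_toSet
  have : Nonempty B := let ⟨b, hb⟩ := hIG.nonempty; ⟨(hper b hb).choose⟩
  choose! c hc using hper
  have hinj : Set.InjOn c (I \ G) := fun b hb b' hb' hcc =>
    infSeq_per_injective x (hφ.1.injOn (Or.inl (hIx b hb.1)) (Or.inl (hIx b' hb'.1))
      ((hc b hb).trans (hcc ▸ (hc b' hb').symm)))
  refine ⟨d, c '' (I \ G), (Set.infinite_image_iff hinj).mpr hIG, ?_⟩
  rintro _ ⟨b, hb, rfl⟩
  exact hc b hb ▸ hφ.mapsTo_XinfT (hIx b hb.1)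

end FullShift

theorem stmt8_general {A : Type*} (M : ℕ)
    (ft : (Fin (M + 2) → A) → Bool)
    (h1 : ∃ x : Fin M → A,
      {b : A | ∀ i : ℕ,
        ft (fun j : Fin (M + 2) => FullShift.per M x b (i + (j : ℕ))) = true}.Infinite)
    (h2 : ∀ v : Fin (M + 1) → A, {b : A | ft (Fin.snoc v b) = true}.Finite) :
    ∀ (B : Type*) [Infinite B] (Y : Set (FullShift B)),
      FullShift.IsStepShift M Y → ¬ FullShift.Conjugate (FullShift.XT ft) Y := by
  rintro B _ Y ⟨gt, rfl⟩ ⟨φ, hφ⟩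
  obtain ⟨x, hI⟩ := h1
  obtain ⟨d, C, hC, hCper⟩ :=
    hφ.exists_infinite_infSeq_per hI fun b hb => FullShift.infSeq_mem_XinfT_iff.mpr hb
  obtain ⟨c, hc⟩ := hC.nonempty
  obtain ⟨u, hu, hφu⟩ := hφ.1.surjOn (FullShift.word_mem_XT_of_infSeq_per_mem d hC hCper hc)
  have hlen : FullShift.len u = (2 * M + 1 : ℕ) := by
    rw [← hφ.2.2.2 u hu, hφu, FullShift.len_word, List.length_ofFn]
  have hlong : ((M + 1 : ℕ) : ℕ∞) ≤ FullShift.len u := by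
    rw [hlen]
    exact_mod_cast (by omega : M + 1 ≤ 2 * M + 1)
  exact ENat.natCast_ne_top _ (hlen.symm.trans (FullShift.len_eq_top_of_mem_XT h2 hu hlong))

/-- If `f̃ : A^{M+2} → {0,1}` satisfies conditions (1) and (2),
then the `(M+1)`-step shift `X_f` is not conjugate to any `M`-step shift space. -/
theorem stmt8 {A : Type*} [Infinite A] (M : ℕ) (hM : 1 ≤ M)
    (ft : (Fin (M + 2) → A) → Bool)
    (h1 : ∃ x : Fin M → A,
      {b : A | ∀ i : ℕ,
        ft (fun j : Fin (M + 2) => FullShift.per M x b (i + (j : ℕ))) = true}.Infinite)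
    (h2 : ∀ v : Fin (M + 1) → A, {b : A | ft (Fin.snoc v b) = true}.Finite) :
    ∀ (B : Type*) [Infinite B] (Y : Set (FullShift B)),
      FullShift.IsStepShift M Y → ¬ FullShift.Conjugate (FullShift.XT ft) Y :=
  stmt8_general M ft h1 h2
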